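/- For every factor index k, the cross-covariance row vector between the score s_{σ²} and the score s_k equals Cov(s_{σ²}, s_k) = (1/(2σ²))·vec( ∑_{j=1}^{l_k} Z_{(k,j)}ᵀ·V⁻¹·Z_{(k,j)} )ᵀ; that is, for every index b ∈ {1,…,q_k²}, Cov(s_{σ²}, (s_k)_b) = (1/(2σ²))·( vec( ∑_{j=1}^{l_k} Z_{(k,j)}ᵀ·V⁻¹·Z_{(k,j)} ) )_b. -/

import Mathlib

open Matrix MeasureTheory ProbabilityTheory

/-- Column-major vectorization of a matrix. -/
def vec {α β R : Type*} (A : Matrix α β R) : β × α → R := fun p => A p.2 p.1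

/-!
Writing `e = σ R u` and using `Rᵀ V⁻¹ R = 1`, the score `s_{σ²}` becomes
`(2σ²)⁻¹ ∑ᵢ (uᵢ² - 1)` and each entry of `s_k` becomes `½ ∑_{a,c} B_{ac} (u_a u_c - δ_{ac})`,
where `B_{ac} = ∑ⱼ (Rᵀ V⁻¹ Zⱼ)_{a,b₂} (Rᵀ V⁻¹ Zⱼ)_{c,b₁}` has trace `vec(∑ⱼ Zⱼᵀ V⁻¹ Zⱼ)_b`.
For independent standard normals `E[(uᵢ² - 1)(u_a u_c - δ_{ac})] = 2 δ_{ia} δ_{ic}`: on the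
diagonal this is `E[(u² - 1)²] = 3 - 2 + 1`, and off it some centred coordinate is independent of
the other factors. As `E[s_{σ²}] = 0`, the covariance is `(2σ²)⁻¹ · ½ · 2 tr B`.
The Gaussian moments are the derivatives at `0` of the moment generating function `exp (t²/2)`.
-/

open Real
open scoped NNReal ENNReal

lemma hasDerivAt_mul_exp_half_sq {p : ℝ → ℝ} {p' t : ℝ} (hp : HasDerivAt p p' t) :
    HasDerivAt (fun t => p t * exp (t ^ 2 / 2)) ((p' + t * p t) * exp (t ^ 2 / 2)) t :=
  (hp.fun_mul ((hasDerivAt_pow 2 t).div_const 2).exp).congr_deriv (by push_cast; ring)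

lemma deriv_mul_exp_half_sq {p q : ℝ → ℝ} (hp : Differentiable ℝ p)
    (hq : ∀ t, deriv p t + t * p t = q t) :
    deriv (fun t => p t * exp (t ^ 2 / 2)) = fun t => q t * exp (t ^ 2 / 2) :=
  funext fun t => hq t ▸ (hasDerivAt_mul_exp_half_sq (hp t).hasDerivAt).deriv

lemma iteratedDeriv_two_exp_half_sq :
    iteratedDeriv 2 (fun t : ℝ => exp (t ^ 2 / 2)) = fun t => (1 + t ^ 2) * exp (t ^ 2 / 2) := by
  have d1 := deriv_mul_exp_half_sq (p := fun _ => 1) (q := fun t => t) (by fun_prop) (by simp)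
  have d2 := deriv_mul_exp_half_sq (p := fun t => t) (q := fun t => 1 + t ^ 2) (by fun_prop)
    (fun t => by simp [sq])
  simp only [one_mul] at d1
  rw [iteratedDeriv_succ, iteratedDeriv_one, d1, d2]

lemma iteratedDeriv_four_exp_half_sq :
    iteratedDeriv 4 (fun t : ℝ => exp (t ^ 2 / 2)) =
      fun t => (3 + 6 * t ^ 2 + t ^ 4) * exp (t ^ 2 / 2) := by
  have d3 := deriv_mul_exp_half_sq (p := fun t => 1 + t ^ 2) (q := fun t => 3 * t + t ^ 3)
    (by fun_prop) (fun t => by simp; ring)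
  have d4 := deriv_mul_exp_half_sq (p := fun t => 3 * t + t ^ 3)
    (q := fun t => 3 + 6 * t ^ 2 + t ^ 4) (by fun_prop)
    (fun t => by simp [deriv_fun_add, mul_comm]; ring)
  rw [iteratedDeriv_succ, iteratedDeriv_succ, iteratedDeriv_two_exp_half_sq, d3, d4]

section GaussianMoments

variable {Ω : Type*} [MeasurableSpace Ω] {μ : Measure Ω} {X : Ω → ℝ}

lemma integral_of_map_eq_gaussianReal {m : ℝ} {v : ℝ≥0} (hX : μ.map X = gaussianReal m v) :
    ∫ ω, X ω ∂μ = m := by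
  have hXm : AEMeasurable X μ := aemeasurable_of_map_neZero (by rw [hX]; infer_instance)
  rw [← integral_id_gaussianReal (μ := m) (v := v), ← hX]
  exact (integral_map hXm aestronglyMeasurable_id).symm

variable [IsProbabilityMeasure μ]

lemma integrableExpSet_eq_univ_of_map_eq_gaussianReal {m : ℝ} {v : ℝ≥0}
    (hX : μ.map X = gaussianReal m v) : integrableExpSet X μ = Set.univ :=
  Set.eq_univ_of_forall fun t => by
    rw [integrableExpSet, Set.mem_ofPred_eq, ← mgf_pos_iff, mgf_gaussianReal hX]
    exact exp_pos _

lemma memLp_of_map_eq_gaussianReal {m : ℝ} {v : ℝ≥0} (hX : μ.map X = gaussianReal m v)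
    (p : ℝ≥0) : MemLp X p μ :=
  memLp_of_mem_interior_integrableExpSet
    (by simp [integrableExpSet_eq_univ_of_map_eq_gaussianReal hX]) p

lemma integrable_pow_of_map_eq_gaussianReal {m : ℝ} {v : ℝ≥0} (hX : μ.map X = gaussianReal m v)
    (k : ℕ) : Integrable (fun ω => X ω ^ k) μ :=
  integrable_pow_of_mem_interior_integrableExpSet
    (by simp [integrableExpSet_eq_univ_of_map_eq_gaussianReal hX]) k

lemma integral_pow_of_map_eq_gaussianReal_zero_one (hX : μ.map X = gaussianReal 0 1) (k : ℕ) :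
    ∫ ω, X ω ^ k ∂μ = iteratedDeriv k (fun t => exp (t ^ 2 / 2)) 0 := by
  have hmgf : mgf X μ = fun t => exp (t ^ 2 / 2) := funext fun t => by
    rw [mgf_gaussianReal hX]; simp
  have h0 : (0 : ℝ) ∈ interior (integrableExpSet X μ) := by
    simp [integrableExpSet_eq_univ_of_map_eq_gaussianReal hX]
  rw [← hmgf, iteratedDeriv_mgf_zero h0]
  rfl

lemma integral_sq_sub_one_of_map_eq_gaussianReal (hX : μ.map X = gaussianReal 0 1) :
    ∫ ω, (X ω ^ 2 - 1) ∂μ = 0 := by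
  rw [integral_sub (integrable_pow_of_map_eq_gaussianReal hX 2) (integrable_const 1),
    integral_pow_of_map_eq_gaussianReal_zero_one hX, iteratedDeriv_two_exp_half_sq]
  simp

lemma integral_sq_sub_one_sq_of_map_eq_gaussianReal (hX : μ.map X = gaussianReal 0 1) :
    ∫ ω, (X ω ^ 2 - 1) ^ 2 ∂μ = 2 := by
  have h4 := integrable_pow_of_map_eq_gaussianReal hX 4
  have h2 : Integrable (fun ω => 2 * X ω ^ 2) μ :=
    (integrable_pow_of_map_eq_gaussianReal hX 2).const_mul 2
  have h42 : Integrable (fun ω => X ω ^ 4 - 2 * X ω ^ 2) μ := h4.sub h2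
  calc ∫ ω, (X ω ^ 2 - 1) ^ 2 ∂μ = ∫ ω, (X ω ^ 4 - 2 * X ω ^ 2 + 1) ∂μ := by
        congr with ω; ring
    _ = 2 := by
      rw [integral_add h42 (integrable_const 1), integral_sub h4 h2, integral_const_mul,
        integral_pow_of_map_eq_gaussianReal_zero_one hX,
        integral_pow_of_map_eq_gaussianReal_zero_one hX, iteratedDeriv_two_exp_half_sq,
        iteratedDeriv_four_exp_half_sq]
      norm_num

end GaussianMoments

section IndependentStdGaussians

variable {Ω ι : Type*} [MeasurableSpace Ω] {μ : Measure Ω} {u : Ω → ι → ℝ}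

lemma integrable_sq_sub_mul_mul_sub [IsFiniteMeasure μ] {X Y Z : Ω → ℝ} (hX : MemLp X 4 μ) (hY : MemLp Y 4 μ)
    (hZ : MemLp Z 4 μ) (c d : ℝ) :
    Integrable (fun ω => (X ω ^ 2 - c) * (Y ω * Z ω - d)) μ := by
  have : ENNReal.HolderTriple 4 4 2 := ⟨by
    rw [← two_mul, show (4 : ℝ≥0∞) = 2 * 2 by norm_num, ENNReal.mul_inv (by simp) (by simp),
      ← mul_assoc, ENNReal.mul_inv_cancel (by simp) (by simp), one_mul]⟩
  have hX2 : MemLp (fun ω => X ω ^ 2 - c) 2 μ := by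
    simp only [sq]
    exact (hX.mul' hX).sub (memLp_const c)
  have hYZ : MemLp (fun ω => Y ω * Z ω - d) 2 μ := (hZ.mul' hY).sub (memLp_const d)
  exact hX2.integrable_mul hYZ

variable [IsProbabilityMeasure μ]

lemma integral_sum_sq_sub_one [Fintype ι]
    (hlaw : ∀ i, μ.map (fun ω => u ω i) = gaussianReal 0 1) :
    ∫ ω, ∑ i, (u ω i ^ 2 - 1) ∂μ = 0 := by
  have hint (i : ι) : Integrable (fun ω => u ω i ^ 2 - 1) μ :=
    (integrable_pow_of_map_eq_gaussianReal (hlaw i) 2).sub (integrable_const 1)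
  rw [integral_finsetSum _ fun i _ => hint i]
  simp [integral_sq_sub_one_of_map_eq_gaussianReal (hlaw _)]

variable [DecidableEq ι]

lemma integral_sq_sub_one_mul_mul_sub_one_apply (hmeas : ∀ i, Measurable fun ω => u ω i)
    (hindep : iIndepFun (fun i ω => u ω i) μ)
    (hlaw : ∀ i, μ.map (fun ω => u ω i) = gaussianReal 0 1) (i a b : ι) :
    ∫ ω, (u ω i ^ 2 - 1) * (u ω a * u ω b - (1 : Matrix ι ι ℝ) a b) ∂μ =
      if i = a ∧ i = b then 2 else 0 := by
  have hφ : Measurable fun x : ℝ => x ^ 2 - 1 := by fun_prop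
  rcases eq_or_ne a b with rfl | hab
  · rw [one_apply_eq]
    rcases eq_or_ne i a with rfl | hia
    · rw [if_pos ⟨rfl, rfl⟩, ← integral_sq_sub_one_sq_of_map_eq_gaussianReal (hlaw i)]
      congr with ω
      ring
    · have hind : IndepFun (fun ω => u ω i ^ 2 - 1) (fun ω => u ω a ^ 2 - 1) μ :=
        (hindep.indepFun hia).comp hφ hφ
      rw [if_neg fun h => hia h.1]
      calc _ = ∫ ω, (u ω i ^ 2 - 1) * (u ω a ^ 2 - 1) ∂μ := by
            congr with ω; ring
        _ = 0 := by
          rw [hind.integral_fun_mul_eq_mul_integral (by fun_prop) (by fun_prop),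
            integral_sq_sub_one_of_map_eq_gaussianReal (hlaw a), mul_zero]
  · rw [one_apply_ne hab, if_neg fun h => hab (h.1.symm.trans h.2)]
    -- one of `a`, `b` differs from `i`: that coordinate is centred and independent of the rest
    obtain ⟨c, d, hci, hcd, hprod⟩ :
        ∃ c d, c ≠ i ∧ c ≠ d ∧ ∀ ω, u ω a * u ω b = u ω c * u ω d := by
      rcases eq_or_ne a i with rfl | hai
      · exact ⟨b, a, fun h => hab h.symm, fun h => hab h.symm, fun ω => mul_comm _ _⟩
      · exact ⟨a, b, hai, hab, fun ω => rfl⟩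
    have hind : IndepFun (fun ω => (u ω i ^ 2 - 1) * u ω d) (fun ω => u ω c) μ :=
      (hindep.indepFun_prodMk hmeas i d c hci.symm hcd.symm).comp
        (φ := fun x : ℝ × ℝ => (x.1 ^ 2 - 1) * x.2) (by fun_prop) measurable_id
    calc _ = ∫ ω, (u ω i ^ 2 - 1) * u ω d * u ω c ∂μ := by
          congr with ω; rw [hprod]; ring
      _ = 0 := by
        rw [hind.integral_fun_mul_eq_mul_integral (by fun_prop) (by fun_prop),
          integral_of_map_eq_gaussianReal (hlaw c), mul_zero]

lemma integral_sum_sq_sub_one_mul_sum [Fintype ι] (hmeas : ∀ i, Measurable fun ω => u ω i)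
    (hindep : iIndepFun (fun i ω => u ω i) μ)
    (hlaw : ∀ i, μ.map (fun ω => u ω i) = gaussianReal 0 1) (B : Matrix ι ι ℝ) :
    ∫ ω, (∑ i, (u ω i ^ 2 - 1)) *
        ∑ a, ∑ b, B a b * (u ω a * u ω b - (1 : Matrix ι ι ℝ) a b) ∂μ = 2 * B.trace := by
  have hL4 (i : ι) : MemLp (fun ω => u ω i) 4 μ := by
    exact_mod_cast memLp_of_map_eq_gaussianReal (hlaw i) 4
  have hint (i a b : ι) : Integrable
      (fun ω => B a b * ((u ω i ^ 2 - 1) * (u ω a * u ω b - (1 : Matrix ι ι ℝ) a b))) μ :=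
    (integrable_sq_sub_mul_mul_sub (hL4 i) (hL4 a) (hL4 b) _ _).const_mul _
  calc _ = ∫ ω, ∑ i, ∑ a, ∑ b,
        B a b * ((u ω i ^ 2 - 1) * (u ω a * u ω b - (1 : Matrix ι ι ℝ) a b)) ∂μ := by
        congr with ω
        rw [Finset.sum_mul]
        simp only [Finset.mul_sum]
        exact Finset.sum_congr rfl fun _ _ => Finset.sum_congr rfl fun _ _ =>
          Finset.sum_congr rfl fun _ _ => by ring
    _ = ∑ i, ∑ a, ∑ b, B a b * (if i = a ∧ i = b then 2 else 0) := by
        rw [integral_finsetSum _ fun i _ => integrable_finsetSum _ fun a _ =>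
          integrable_finsetSum _ fun b _ => hint i a b]
        refine Finset.sum_congr rfl fun i _ => ?_
        rw [integral_finsetSum _ fun a _ => integrable_finsetSum _ fun b _ => hint i a b]
        refine Finset.sum_congr rfl fun a _ => ?_
        rw [integral_finsetSum _ fun b _ => hint i a b]
        refine Finset.sum_congr rfl fun b _ => ?_
        rw [integral_const_mul,
          integral_sq_sub_one_mul_mul_sub_one_apply hmeas hindep hlaw]
    _ = 2 * B.trace := by
        simp [ite_and, Matrix.trace, Finset.mul_sum, mul_comm]

end IndependentStdGaussians

namespace Matrix

lemma transpose_mul_mul_apply {m n α : Type*} [Fintype m] [CommSemiring α] (A : Matrix m n α)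
    (M : Matrix m m α) (x y : n) :
    (Aᵀ * M * A) x y = ∑ a, ∑ c, A a x * A c y * M a c := by
  simp only [mul_apply, transpose_apply, Finset.sum_mul]
  rw [Finset.sum_comm]
  exact Finset.sum_congr rfl fun _ _ => Finset.sum_congr rfl fun _ _ => by ring

lemma dotProduct_transpose_mul_mul_mulVec {m n α : Type*} [Fintype m] [Fintype n]
    [CommSemiring α] (R : Matrix m n α) (W : Matrix m m α) (x y : n → α) :
    x ⬝ᵥ ((Rᵀ * W * R) *ᵥ y) = (R *ᵥ x) ⬝ᵥ (W *ᵥ (R *ᵥ y)) := by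
  rw [← mulVec_mulVec, ← mulVec_mulVec, dotProduct_mulVec, vecMul_transpose]

lemma mul_vecMulVec_mul_transpose {m n α : Type*} [Fintype n] [CommSemiring α]
    (R : Matrix m n α) (x y : n → α) :
    R * vecMulVec x y * Rᵀ = vecMulVec (R *ᵥ x) (R *ᵥ y) := by
  rw [mul_vecMulVec, vecMulVec_mul, vecMul_transpose]

variable {n α : Type*} [Fintype n] [DecidableEq n] [CommRing α] {R V : Matrix n n α}

lemma transpose_mul_inv_mul_eq_one (hR : R * Rᵀ = V) (hV : IsUnit V.det) :
    Rᵀ * V⁻¹ * R = 1 := by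
  have hRdet : IsUnit R.det := by
    rw [← hR, det_mul, det_transpose] at hV
    exact isUnit_of_mul_isUnit_left hV
  rw [← hR, mul_inv_rev, ← mul_assoc, mul_nonsing_inv _ (by rwa [det_transpose]), one_mul,
    nonsing_inv_mul _ hRdet]

lemma transpose_mul_inv_mul_mul_inv_mul {q : Type*} (hR : R * Rᵀ = V)
    (Z : Matrix n q α) (W : Matrix n n α) :
    Zᵀ * V⁻¹ * (R * W * Rᵀ) * V⁻¹ * Z = (Rᵀ * V⁻¹ * Z)ᵀ * W * (Rᵀ * V⁻¹ * Z) := by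
  have hVinv : V⁻¹ᵀ = V⁻¹ := by
    rw [transpose_nonsing_inv, ← hR, transpose_mul, transpose_transpose]
  simp only [transpose_mul, transpose_transpose, hVinv, Matrix.mul_assoc]

end Matrix

noncomputable section Scores

variable {n : Type*} [Fintype n] [DecidableEq n]

def varianceScore (σ : ℝ) (V : Matrix n n ℝ) (e : n → ℝ) : ℝ :=
  -((Fintype.card n : ℝ) / (2 * σ ^ 2)) + e ⬝ᵥ (V⁻¹ *ᵥ e) / (2 * σ ^ 4)

def factorScore {ι q : Type*} [Fintype ι] (σ : ℝ) (V : Matrix n n ℝ)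
    (Z : ι → Matrix n q ℝ) (e : n → ℝ) : Matrix q q ℝ :=
  (1 / 2 : ℝ) • ∑ j, (Z j)ᵀ * V⁻¹ * ((σ ^ 2)⁻¹ • vecMulVec e e - V) * V⁻¹ * Z j

variable {σ : ℝ} {R V : Matrix n n ℝ}

lemma varianceScore_smul_mulVec (hσ : σ ≠ 0) (hRV : Rᵀ * V⁻¹ * R = 1) (x : n → ℝ) :
    varianceScore σ V (σ • (R *ᵥ x)) = 1 / (2 * σ ^ 2) * ∑ i, (x i ^ 2 - 1) := by
  have hquad : (R *ᵥ x) ⬝ᵥ (V⁻¹ *ᵥ (R *ᵥ x)) = ∑ i, x i ^ 2 := by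
    rw [← dotProduct_transpose_mul_mul_mulVec, hRV, one_mulVec]
    simp [dotProduct, sq]
  rw [varianceScore, mulVec_smul, smul_dotProduct, dotProduct_smul, hquad,
    Finset.sum_sub_distrib]
  simp only [smul_eq_mul, Finset.sum_const, Finset.card_univ, nsmul_eq_mul, mul_one]
  field_simp
  ring

lemma factorScore_smul_mulVec_apply {ι q : Type*} [Fintype ι] (hσ : σ ≠ 0)
    (hR : R * Rᵀ = V) (Z : ι → Matrix n q ℝ) (x : n → ℝ) (y z : q) :
    factorScore σ V Z (σ • (R *ᵥ x)) y z =
      1 / 2 * ∑ a, ∑ c, (∑ j, (Rᵀ * V⁻¹ * Z j) a y * (Rᵀ * V⁻¹ * Z j) c z) *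
        (x a * x c - (1 : Matrix n n ℝ) a c) := by
  have hwhite : (σ ^ 2)⁻¹ • vecMulVec (σ • (R *ᵥ x)) (σ • (R *ᵥ x)) - V =
      R * (vecMulVec x x - 1) * Rᵀ := by
    rw [Matrix.mul_sub, Matrix.sub_mul, Matrix.mul_one, hR, mul_vecMulVec_mul_transpose,
      smul_vecMulVec, vecMulVec_smul, smul_smul, smul_smul,
      show (σ ^ 2)⁻¹ * σ * σ = 1 by field_simp, one_smul]
  simp only [factorScore, hwhite, transpose_mul_inv_mul_mul_inv_mul hR, Matrix.smul_apply,
    Matrix.sum_apply, transpose_mul_mul_apply, smul_eq_mul, Matrix.sub_apply, vecMulVec_apply,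
    Finset.sum_mul]
  congr 1
  rw [Finset.sum_comm]
  refine Finset.sum_congr rfl fun a _ => ?_
  rw [Finset.sum_comm]

lemma sum_sum_transpose_mul_inv_mul_apply {ι q : Type*} [Fintype ι] (hR : R * Rᵀ = V)
    (hV : IsUnit V.det) (Z : ι → Matrix n q ℝ) (y z : q) :
    ∑ a, ∑ j, (Rᵀ * V⁻¹ * Z j) a y * (Rᵀ * V⁻¹ * Z j) a z =
      (∑ j, (Z j)ᵀ * V⁻¹ * Z j) y z := by
  have hgram (j : ι) :
      (Z j)ᵀ * V⁻¹ * Z j = (Rᵀ * V⁻¹ * Z j)ᵀ * (1 : Matrix n n ℝ) * (Rᵀ * V⁻¹ * Z j) := by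
    rw [← transpose_mul_inv_mul_mul_inv_mul hR, Matrix.mul_one, hR, Matrix.mul_assoc _ V⁻¹ V,
      nonsing_inv_mul _ hV, Matrix.mul_one]
  simp only [Matrix.sum_apply, hgram, Matrix.mul_one, mul_apply, transpose_apply]
  exact Finset.sum_comm

end Scores

theorem stmt5 {Ω : Type*} [MeasurableSpace Ω] (μ : Measure Ω) [IsProbabilityMeasure μ]
    (n r : ℕ) (σ : ℝ) (hσ : 0 < σ)
    (V R : Matrix (Fin n) (Fin n) ℝ) (hVpd : V.PosDef) (hR : R * Rᵀ = V)
    (l q : Fin r → ℕ)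
    (Z : (k : Fin r) → Fin (l k) → Matrix (Fin n) (Fin (q k)) ℝ)
    (u : Ω → Fin n → ℝ)
    (humeas : ∀ i, Measurable fun ω => u ω i)
    (huindep : iIndepFun (fun i ω => u ω i) μ)
    (hulaw : ∀ i, Measure.map (fun ω => u ω i) μ = gaussianReal 0 1)
    (e : Ω → Fin n → ℝ) (he : ∀ ω, e ω = σ • (R *ᵥ u ω))
    (sσ : Ω → ℝ)
    (hsσ : ∀ ω, sσ ω = -((n : ℝ) / (2 * σ ^ 2)) + (e ω ⬝ᵥ (V⁻¹ *ᵥ e ω)) / (2 * σ ^ 4))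
    (s : (k : Fin r) → Ω → (Fin (q k) × Fin (q k)) → ℝ)
    (hs : ∀ k ω idx, s k ω idx =
      ((1 / 2 : ℝ) •
        ∑ j, (Z k j)ᵀ * V⁻¹ * ((σ ^ 2)⁻¹ • vecMulVec (e ω) (e ω) - V) * V⁻¹ * Z k j)
        idx.2 idx.1) :
    ∀ (k : Fin r) (b : Fin (q k) × Fin (q k)),
      (∫ ω, sσ ω * s k ω b ∂μ) - (∫ ω, sσ ω ∂μ) * (∫ ω, s k ω b ∂μ) =
        (1 / (2 * σ ^ 2)) * _root_.vec (∑ j, (Z k j)ᵀ * V⁻¹ * Z k j) b := by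
  intro k b
  have hV : IsUnit V.det := (isUnit_iff_isUnit_det V).mp hVpd.isUnit
  set B : Matrix (Fin n) (Fin n) ℝ := of fun a c =>
    ∑ j, (Rᵀ * V⁻¹ * Z k j) a b.2 * (Rᵀ * V⁻¹ * Z k j) c b.1
  have hsσ' (ω : Ω) : sσ ω = 1 / (2 * σ ^ 2) * ∑ i, (u ω i ^ 2 - 1) := by
    rw [← varianceScore_smul_mulVec hσ.ne' (transpose_mul_inv_mul_eq_one hR hV), ← he,
      hsσ, varianceScore, Fintype.card_fin]
  have hs' (ω : Ω) :
      s k ω b = 1 / 2 * ∑ a, ∑ c, B a c * (u ω a * u ω c - (1 : Matrix _ _ ℝ) a c) := by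
    rw [hs, he]
    exact factorScore_smul_mulVec_apply hσ.ne' hR (Z k) (u ω) b.2 b.1
  have htrace : B.trace = _root_.vec (∑ j, (Z k j)ᵀ * V⁻¹ * Z k j) b :=
    sum_sum_transpose_mul_inv_mul_apply hR hV (Z k) b.2 b.1
  simp only [hsσ', hs']
  rw [integral_const_mul, integral_sum_sq_sub_one hulaw, mul_zero, zero_mul, sub_zero]
  calc _ = 1 / (2 * σ ^ 2) * (1 / 2) * ∫ ω, (∑ i, (u ω i ^ 2 - 1)) *
        ∑ a, ∑ c, B a c * (u ω a * u ω c - (1 : Matrix _ _ ℝ) a c) ∂μ := by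
        rw [← integral_const_mul]; congr with ω; ring
    _ = _ := by
        rw [integral_sum_sq_sub_one_mul_sum humeas huindep hulaw, htrace]; ring
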